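/- arXiv:2107.10978 — 2 statements merged into one kernel-verified Lean document; each statement's English description precedes it below -/
import Mathlib

section
/- For any real a > 0 and positive integer n, ∑_{k=1}^{n} ψ₀(k+a)² = (a+n)ψ₀(a+n+1)² − (2a+2n+1)ψ₀(a+n+1) − a·ψ₀(a+1)² + (2a+1)ψ₀(a+1) + 2n. -/
/-!
Induction on `n`: after substituting `ψ₀(a+n+2) = ψ₀(a+n+1) + 1/(a+n+1)`, the increment of the
right-hand side is exactly `ψ₀(a+n+1)²`, an identity of rational expressions in `ψ₀(a+n+1)`.
The recurrence itself comes from `Γ(y+1) = y Γ(y)` near any `x` off the poles of `Γ`.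
-/

open Finset

/-- The `m`-th polygamma function: the `(m+1)`-th derivative of `log ∘ Γ`. -/
noncomputable def psi (m : ℕ) (x : ℝ) : ℝ :=
  iteratedDeriv (m + 1) (fun y => Real.log (Real.Gamma y)) x

lemma psi_zero_eq_deriv (x : ℝ) : psi 0 x = deriv (fun y => Real.log (Real.Gamma y)) x := by
  simp [psi, iteratedDeriv_one]

lemma differentiableAt_log_Gamma {x : ℝ} (hx : ∀ m : ℕ, x ≠ -m) :
    DifferentiableAt ℝ (fun y => Real.log (Real.Gamma y)) x :=
  (Real.differentiableAt_Gamma hx).log (Real.Gamma_ne_zero hx)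

lemma psi_zero_add_one {x : ℝ} (hx : ∀ m : ℕ, x ≠ -m) :
    psi 0 (x + 1) = psi 0 x + 1 / x := by
  have hx0 : x ≠ 0 := by simpa using hx 0
  have log_Gamma_add_one : (fun y => Real.log (Real.Gamma (y + 1)))
      =ᶠ[nhds x] fun y => Real.log y + Real.log (Real.Gamma y) := by
    filter_upwards [isOpen_ne.mem_nhds hx0,
      (Real.differentiableAt_Gamma hx).continuousAt.eventually_ne (Real.Gamma_ne_zero hx)]
      with y hy hΓy
    rw [Real.Gamma_add_one hy, Real.log_mul hy hΓy]
  rw [psi_zero_eq_deriv, psi_zero_eq_deriv, ← deriv_comp_add_const, log_Gamma_add_one.deriv_eq,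
    deriv_fun_add (Real.differentiableAt_log hx0) (differentiableAt_log_Gamma hx),
    Real.deriv_log, add_comm, one_div]

lemma sum_psi_zero_sq {a : ℝ} (ha : ∀ m : ℕ, a + 1 ≠ -m) (n : ℕ) :
    ∑ k ∈ Icc 1 n, (psi 0 ((k : ℝ) + a))^2 =
      (a + n) * (psi 0 (a + n + 1))^2 - (2*a + 2*n + 1) * psi 0 (a + n + 1) -
        a * (psi 0 (a + 1))^2 + (2*a + 1) * psi 0 (a + 1) + 2*n := by
  induction n with
  | zero => simp
  | succ n ih =>
    have hn : ∀ m : ℕ, a + n + 1 ≠ -m := fun m h => ha (m + n) (by push_cast; linarith)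
    have hn0 : a + n + 1 ≠ 0 := by simpa using hn 0
    have hrec : psi 0 (a + (n + 1 : ℕ) + 1) = psi 0 (a + n + 1) + 1 / (a + n + 1) := by
      rw [← psi_zero_add_one hn]; push_cast; ring_nf
    rw [sum_Icc_succ_top (by omega), ih, hrec,
      show ((n + 1 : ℕ) : ℝ) + a = a + n + 1 by push_cast; ring]
    field_simp
    push_cast
    ring

theorem stmt_2_general (a : ℝ) (ha : 0 < a) (n : ℕ) :
    ∑ k ∈ Icc 1 n, (psi 0 ((k : ℝ) + a))^2 =
      (a + n) * (psi 0 (a + n + 1))^2 - (2*a + 2*n + 1) * psi 0 (a + n + 1) -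
        a * (psi 0 (a + 1))^2 + (2*a + 1) * psi 0 (a + 1) + 2*n :=
  sum_psi_zero_sq (fun m h => by linarith [(m.cast_nonneg : (0 : ℝ) ≤ m)]) n

theorem stmt_2 (a : ℝ) (ha : 0 < a) (n : ℕ) (hn : 0 < n) :
    ∑ k ∈ Icc 1 n, (psi 0 ((k : ℝ) + a))^2 =
      (a + n) * (psi 0 (a + n + 1))^2 - (2*a + 2*n + 1) * psi 0 (a + n + 1) -
        a * (psi 0 (a + 1))^2 + (2*a + 1) * psi 0 (a + 1) + 2*n :=
  stmt_2_general a ha n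
end

section
/- For positive integers m ≤ n, ∑_{k=1}^{m} (n−k)!/((m−k)! k) · ψ₀(n+1−k) = (n!/m!)·[ψ₁(n+1) − ψ₁(n−m+1) + ψ₀(n+1)(ψ₀(n+1) − ψ₀(n−m+1))]. -/
/-!
Put `a = ψ₀(n+1)` and `S t = ∑_{j<t} 1/(n-j)`. The recurrences `ψ₀(x+1) = ψ₀(x) + 1/x`
and `ψ₁(x+1) = ψ₁(x) - 1/x²` give `ψ₀(n+1-t) = a - S t` and
`ψ₁(n+1) - ψ₁(n-m+1) = -∑_{j<m} 1/(n-j)²`.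
Writing `(n-k)!/(m-k)! = (n!/m!) · m^(k)/n^(k)` with falling factorials, the identity reduces to
`∑_{k=1}^m m^(k)/(n^(k) k) = S m` and `∑_{k=1}^m m^(k)/(n^(k) k) · S k = ∑_{j<m} 1/(n-j)²`.
Both follow by induction on `m` from Pascal's rule `(m+1)^(k) = m^(k) + k·m^(k-1)`: the increment
in `m` is a sum with weights `m^(k)/n^(k+1) = (r k - r (k+1))/(n-m)`, `r k = m^(k)/n^(k)`, which
telescopes (directly, resp. after summation by parts) to `1/(n-m)`, resp. `1/(n-m)²`.
-/

open Finset

open scoped Nat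

theorem Real.contDiffAt_Gamma {n : WithTop ℕ∞} {x : ℝ} (hx : Real.Gamma x ≠ 0) :
    ContDiffAt ℝ n Real.Gamma x := by
  have hinv : ContDiffAt ℝ n (fun y : ℝ => (Real.Gamma y)⁻¹) x := by
    have := (Complex.differentiable_one_div_Gamma.contDiff (n := n)).contDiffAt.real_of_complex
      (z := x)
    simpa only [Complex.Gamma_ofReal, ← Complex.ofReal_inv, Complex.ofReal_re] using this
  simpa only [Pi.inv_def, inv_inv] using hinv.inv (inv_ne_zero hx)

theorem Real.contDiffAt_log_Gamma {n : WithTop ℕ∞} {x : ℝ} (hx : Real.Gamma x ≠ 0) :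
    ContDiffAt ℝ n (fun y => Real.log (Real.Gamma y)) x :=
  (Real.contDiffAt_log.2 hx).comp x (Real.contDiffAt_Gamma hx)

theorem psi_add_one (k : ℕ) {x : ℝ} (hx : 0 < x) :
    psi k (x + 1) = psi k x + (-1) ^ k * k ! * x ^ (-1 - k : ℤ) := by
  have hshift : Set.EqOn (fun y => Real.log (Real.Gamma (y + 1)))
      (Real.log + fun y => Real.log (Real.Gamma y)) (Set.Ioi 0) := fun y (hy : 0 < y) => by
    simp only [Pi.add_apply]
    rw [Real.Gamma_add_one hy.ne', Real.log_mul hy.ne' (Real.Gamma_pos_of_pos hy).ne']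
  have hlog : iteratedDeriv (k + 1) Real.log x = (-1) ^ k * k ! * x ^ (-1 - k : ℤ) := by
    rw [iteratedDeriv_succ', Real.deriv_log', iteratedDeriv_eq_iterate, iter_deriv_inv]
  unfold psi
  rw [← congrFun (iteratedDeriv_comp_add_const _ _ _) x,
    hshift.iteratedDeriv_of_isOpen isOpen_Ioi _ hx,
    iteratedDeriv_add (Real.contDiffAt_log.2 hx.ne')
      (Real.contDiffAt_log_Gamma (Real.Gamma_pos_of_pos hx).ne'), hlog, add_comm]

theorem psi_add_one_sub_natCast (k t : ℕ) {x : ℝ} (ht : (t : ℝ) < x + 1) :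
    psi k (x + 1 - t) =
      psi k (x + 1) - (-1) ^ k * k ! * ∑ j ∈ range t, (x - j) ^ (-1 - k : ℤ) := by
  induction t with
  | zero => simp
  | succ t ih =>
    have hpos : 0 < x - t := by push_cast at ht; linarith
    have hstep := psi_add_one k hpos
    rw [sub_add_eq_add_sub, ih (by push_cast at ht; linarith)] at hstep
    rw [sum_range_succ, Nat.cast_succ, show x + 1 - (t + 1 : ℝ) = x - t by ring]
    linear_combination -hstep

theorem Nat.cast_descFactorial_succ {R : Type*} [CommRing R] (n k : ℕ) :
    (n.descFactorial (k + 1) : R) = n.descFactorial k * (n - k) := by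
  rcases le_or_gt k n with h | h
  · rw [Nat.descFactorial_succ, Nat.cast_mul, Nat.cast_sub h, mul_comm]
  · simp [Nat.descFactorial_of_lt h]

theorem Nat.succ_descFactorial_succ_eq_add (p k : ℕ) :
    (p + 1).descFactorial (k + 1) = p.descFactorial (k + 1) + (k + 1) * p.descFactorial k := by
  rw [Nat.succ_descFactorial_succ, Nat.descFactorial_succ, ← Nat.add_mul]
  rcases le_or_gt k p with h | h
  · rw [show p - k + (k + 1) = p + 1 by omega]
  · simp [Nat.descFactorial_of_lt h]

section FallingFactorialSums

variable {n p : ℕ}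

theorem descFactorial_div_descFactorial_succ {k : ℕ} (hk : k < n) (hp : p ≠ n) :
    (p.descFactorial k / n.descFactorial (k + 1) : ℝ) =
      ((p.descFactorial k / n.descFactorial k : ℝ) -
        p.descFactorial (k + 1) / n.descFactorial (k + 1)) / (n - p) := by
  have hd : (n.descFactorial k : ℝ) ≠ 0 := by
    exact_mod_cast (Nat.descFactorial_pos.2 hk.le).ne'
  have hnk : (n : ℝ) - k ≠ 0 := sub_ne_zero.2 (by exact_mod_cast hk.ne')
  have hnp : (n : ℝ) - p ≠ 0 := sub_ne_zero.2 (by exact_mod_cast hp.symm)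
  rw [Nat.cast_descFactorial_succ, Nat.cast_descFactorial_succ]
  field_simp
  ring

theorem sum_range_descFactorial_div_descFactorial_succ (h : p < n) :
    ∑ k ∈ range (p + 1), (p.descFactorial k / n.descFactorial (k + 1) : ℝ) =
      ((n : ℝ) - p)⁻¹ := by
  rw [sum_congr rfl fun k hk => descFactorial_div_descFactorial_succ
      ((Nat.lt_succ_iff.1 (mem_range.1 hk)).trans_lt h) h.ne, ← sum_div,
    sum_range_sub' (fun k => (p.descFactorial k / n.descFactorial k : ℝ)),
    Nat.descFactorial_of_lt p.lt_succ_self]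
  simp

theorem sum_range_descFactorial_div_descFactorial_succ_mul_sum_inv (h : p < n) :
    ∑ k ∈ range (p + 1), (p.descFactorial k / n.descFactorial (k + 1) : ℝ) *
      ∑ j ∈ range (k + 1), ((n : ℝ) - j)⁻¹ = (((n : ℝ) - p) ^ 2)⁻¹ := by
  set r : ℕ → ℝ := fun k => p.descFactorial k / n.descFactorial k
  set S : ℕ → ℝ := fun k => ∑ j ∈ range k, ((n : ℝ) - j)⁻¹
  have hnp : (n : ℝ) - p ≠ 0 := sub_ne_zero.2 (by exact_mod_cast h.ne')
  -- summation by parts, the weights being `(r k - r (k + 1)) / (n - p)`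
  have hterm : ∀ k ∈ range (p + 1),
      (p.descFactorial k / n.descFactorial (k + 1) : ℝ) * S (k + 1) =
      (r k * S k - r (k + 1) * S (k + 1)) / (n - p) +
        (p.descFactorial k / n.descFactorial (k + 1) : ℝ) / (n - p) := by
    intro k hk
    have hkn : k < n := (Nat.lt_succ_iff.1 (mem_range.1 hk)).trans_lt h
    have hd : (n.descFactorial k : ℝ) ≠ 0 := by
      exact_mod_cast (Nat.descFactorial_pos.2 hkn.le).ne'
    have hnk : (n : ℝ) - k ≠ 0 := sub_ne_zero.2 (by exact_mod_cast hkn.ne')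
    simp only [r, S, sum_range_succ _ k, Nat.cast_descFactorial_succ]
    field_simp
    ring
  rw [sum_congr rfl hterm, sum_add_distrib, ← sum_div, ← sum_div,
    sum_range_sub' (fun k => r k * S k), sum_range_descFactorial_div_descFactorial_succ h]
  simp only [r, S, Nat.descFactorial_zero, Nat.descFactorial_of_lt p.lt_succ_self, sum_range_zero,
    Nat.cast_zero, mul_zero, zero_mul, zero_div, sub_zero, zero_add]
  field_simp

theorem sum_range_descFactorial_div_mul_eq_sum_of_forall_lt (w g : ℕ → ℝ)
    (hg : ∀ p < n, ∑ k ∈ range (p + 1),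
      (p.descFactorial k / n.descFactorial (k + 1) : ℝ) * w (k + 1) = g p) :
    ∀ p ≤ n, ∑ k ∈ range p,
      (p.descFactorial (k + 1) / n.descFactorial (k + 1) : ℝ) / (k + 1) * w (k + 1) =
        ∑ j ∈ range p, g j := by
  intro p hp
  induction p with
  | zero => simp
  | succ p ih =>
    have hpn : p < n := hp
    have hpascal : ∀ k ∈ range (p + 1),
        ((p + 1).descFactorial (k + 1) / n.descFactorial (k + 1) : ℝ) / (k + 1) * w (k + 1) =
          (p.descFactorial (k + 1) / n.descFactorial (k + 1) : ℝ) / (k + 1) * w (k + 1) +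
            (p.descFactorial k / n.descFactorial (k + 1) : ℝ) * w (k + 1) := by
      intro k _
      rw [Nat.succ_descFactorial_succ_eq_add]
      push_cast
      field_simp
    rw [sum_congr rfl hpascal, sum_add_distrib, hg p hpn, sum_range_succ _ p,
      Nat.descFactorial_of_lt p.lt_succ_self, ih hpn.le, sum_range_succ]
    simp

end FallingFactorialSums

theorem Finset.sum_Icc_one_eq_sum_range {M : Type*} [AddCommMonoid M] (f : ℕ → M) (m : ℕ) :
    ∑ k ∈ Icc 1 m, f k = ∑ k ∈ range m, f (k + 1) := by
  rw [range_eq_Ico, sum_Ico_add', zero_add, Ico_add_one_right_eq_Icc]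

theorem factorial_sub_div_factorial_sub {k m n : ℕ} (hkm : k ≤ m) (hmn : m ≤ n) :
    ((n - k)! / (m - k)! : ℝ) = n ! / m ! * (m.descFactorial k / n.descFactorial k) := by
  have hm : (m.descFactorial k : ℝ) ≠ 0 := by exact_mod_cast (Nat.descFactorial_pos.2 hkm).ne'
  have hn : (n.descFactorial k : ℝ) ≠ 0 := by
    exact_mod_cast (Nat.descFactorial_pos.2 (hkm.trans hmn)).ne'
  rw [← Nat.factorial_mul_descFactorial hkm, ← Nat.factorial_mul_descFactorial (hkm.trans hmn)]
  push_cast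
  field_simp

theorem stmt_18_general (m n : ℕ) (hmn : m ≤ n) :
    ∑ k ∈ Icc 1 m, ((Nat.factorial (n - k) : ℝ) / (Nat.factorial (m - k) : ℝ)) / (k : ℝ) * psi 0 ((n : ℝ) + 1 - k) =
      ((Nat.factorial n : ℝ) / (Nat.factorial m : ℝ)) *
        (psi 1 ((n : ℝ) + 1) - psi 1 ((n : ℝ) - m + 1) +
          psi 0 ((n : ℝ) + 1) * (psi 0 ((n : ℝ) + 1) - psi 0 ((n : ℝ) - m + 1))) := by
  set a := psi 0 ((n : ℝ) + 1)
  set S : ℕ → ℝ := fun t => ∑ j ∈ range t, ((n : ℝ) - j)⁻¹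
  set c : ℕ → ℝ := fun k =>
    (m.descFactorial (k + 1) / n.descFactorial (k + 1) : ℝ) / (k + 1)
  have hm_lt : (m : ℝ) < n + 1 := by exact_mod_cast Nat.lt_succ_of_le hmn
  have hpsi0 : ∀ t ≤ m, psi 0 ((n : ℝ) + 1 - t) = a - S t := fun t ht => by
    simpa using psi_add_one_sub_natCast 0 t (lt_of_le_of_lt (by exact_mod_cast ht) hm_lt)
  have hpsi1 : psi 1 ((n : ℝ) + 1) - psi 1 ((n : ℝ) - m + 1) =
      -∑ j ∈ range m, (((n : ℝ) - j) ^ 2)⁻¹ := by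
    rw [sub_add_eq_add_sub, psi_add_one_sub_natCast 1 m hm_lt]
    simp [zpow_neg]
  have hc_sum : ∑ k ∈ range m, c k = S m := by
    simpa only [mul_one] using sum_range_descFactorial_div_mul_eq_sum_of_forall_lt (fun _ => 1) _
      (fun p hp => by simpa only [mul_one] using sum_range_descFactorial_div_descFactorial_succ hp)
      m hmn
  have hc_sum_mul :
      ∑ k ∈ range m, c k * S (k + 1) = ∑ j ∈ range m, (((n : ℝ) - j) ^ 2)⁻¹ :=
    sum_range_descFactorial_div_mul_eq_sum_of_forall_lt S _
      (fun p hp => sum_range_descFactorial_div_descFactorial_succ_mul_sum_inv hp) m hmn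
  rw [sum_Icc_one_eq_sum_range]
  calc _ = ∑ k ∈ range m, n ! / m ! * (c k * a - c k * S (k + 1)) := by
        refine sum_congr rfl fun k hk => ?_
        have hk : k + 1 ≤ m := mem_range.1 hk
        rw [factorial_sub_div_factorial_sub hk hmn, hpsi0 (k + 1) hk]
        push_cast
        ring
    _ = n ! / m ! * (a * ∑ k ∈ range m, c k - ∑ k ∈ range m, c k * S (k + 1)) := by
        rw [← mul_sum, sum_sub_distrib, ← sum_mul, mul_comm a]
    _ = _ := by
        rw [hc_sum, hc_sum_mul, hpsi1, sub_add_eq_add_sub, hpsi0 m le_rfl]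
        ring

theorem stmt_18 (m n : ℕ) (hm : 0 < m) (hmn : m ≤ n) :
    ∑ k ∈ Icc 1 m, ((Nat.factorial (n - k) : ℝ) / (Nat.factorial (m - k) : ℝ)) / (k : ℝ) * psi 0 ((n : ℝ) + 1 - k) =
      ((Nat.factorial n : ℝ) / (Nat.factorial m : ℝ)) *
        (psi 1 ((n : ℝ) + 1) - psi 1 ((n : ℝ) - m + 1) +
          psi 0 ((n : ℝ) + 1) * (psi 0 ((n : ℝ) + 1) - psi 0 ((n : ℝ) - m + 1))) :=
  stmt_18_general m n hmn
end
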